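/- Let N be an absolute normalized norm on ℝ². The space (ℝ², N) has the positive strong diameter 2 property if and only if (ℝ², N*) is positively octahedral, where N* is the dual norm of N. -/

import Mathlib

noncomputable section

/-- An absolute normalized norm on `ℝ²`. -/
structure AbsoluteNormalizedNorm where
  toFun : ℝ × ℝ → ℝ
  add_le : ∀ u v : ℝ × ℝ, toFun (u + v) ≤ toFun u + toFun v
  smul_eq : ∀ (r : ℝ) (u : ℝ × ℝ), toFun (r • u) = |r| * toFun u
  eq_zero : ∀ u : ℝ × ℝ, toFun u = 0 → u = 0
  absolute : ∀ a b : ℝ, toFun (a, b) = toFun (|a|, |b|)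
  norm_one_zero : toFun (1, 0) = 1
  norm_zero_one : toFun (0, 1) = 1

namespace AbsoluteNormalizedNorm

variable (N : AbsoluteNormalizedNorm)

lemma map_zero : N.toFun 0 = 0 := by
  have := N.smul_eq 0 0
  simpa using this

lemma nonneg (u : ℝ × ℝ) : 0 ≤ N.toFun u := by
  have hneg : N.toFun (-u) = N.toFun u := by
    have := N.smul_eq (-1) u
    simpa using this
  have h0 := N.add_le u (-u)
  simp [N.map_zero] at h0
  linarith [h0, hneg]

lemma pair_decomp (a b : ℝ) : ((a, b) : ℝ × ℝ) = a • ((1:ℝ), (0:ℝ)) + b • ((0:ℝ), (1:ℝ)) := by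
  simp [Prod.ext_iff]

lemma le_l1 (a b : ℝ) : N.toFun (a, b) ≤ |a| + |b| := by
  rw [pair_decomp a b]
  calc N.toFun (a • ((1:ℝ),(0:ℝ)) + b • ((0:ℝ),(1:ℝ)))
      ≤ N.toFun (a • ((1:ℝ),(0:ℝ))) + N.toFun (b • ((0:ℝ),(1:ℝ))) := N.add_le _ _
    _ = |a| + |b| := by rw [N.smul_eq, N.smul_eq, N.norm_one_zero, N.norm_zero_one]; ring

lemma fst_le (a b : ℝ) : |a| ≤ N.toFun (a, b) := by
  have habs : N.toFun (a, -b) = N.toFun (a, b) := by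
    rw [N.absolute a (-b), N.absolute a b, abs_neg]
  have hmid : ((a, 0) : ℝ × ℝ) = (2:ℝ)⁻¹ • ((a, b) + (a, -b)) := by
    simp [Prod.ext_iff]; ring
  have h1 : N.toFun (a, 0) ≤ N.toFun (a, b) := by
    rw [hmid, N.smul_eq]
    have := N.add_le (a, b) (a, -b)
    rw [habs] at this
    rw [abs_of_pos (by norm_num : (0:ℝ) < 2⁻¹)]
    nlinarith [this]
  have : N.toFun (a, 0) = |a| := by
    have : ((a, 0) : ℝ × ℝ) = a • ((1:ℝ), (0:ℝ)) := by simp [Prod.ext_iff]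
    rw [this, N.smul_eq, N.norm_one_zero, mul_one]
  linarith [h1, this.ge, this.le]

lemma snd_le (a b : ℝ) : |b| ≤ N.toFun (a, b) := by
  have habs : N.toFun (-a, b) = N.toFun (a, b) := by
    rw [N.absolute (-a) b, N.absolute a b, abs_neg]
  have hmid : ((0, b) : ℝ × ℝ) = (2:ℝ)⁻¹ • ((a, b) + (-a, b)) := by
    simp [Prod.ext_iff]; ring
  have h1 : N.toFun (0, b) ≤ N.toFun (a, b) := by
    rw [hmid, N.smul_eq]
    have := N.add_le (a, b) (-a, b)
    rw [habs] at this
    rw [abs_of_pos (by norm_num : (0:ℝ) < 2⁻¹)]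
    nlinarith [this]
  have : N.toFun (0, b) = |b| := by
    have : ((0, b) : ℝ × ℝ) = b • ((0:ℝ), (1:ℝ)) := by simp [Prod.ext_iff]
    rw [this, N.smul_eq, N.norm_zero_one, mul_one]
  linarith [h1, this.ge, this.le]

end AbsoluteNormalizedNorm

lemma cont_of_norm_like (P : ℝ × ℝ → ℝ)
    (hadd : ∀ u v : ℝ × ℝ, P (u + v) ≤ P u + P v)
    (hsmul : ∀ (r : ℝ) (u : ℝ × ℝ), P (r • u) = |r| * P u)
    (h1 : P (1, 0) ≤ 1) (h2 : P (0, 1) ≤ 1) : Continuous P := by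
  have hP0 : P 0 = 0 := by simpa using hsmul 0 0
  have hnonneg : ∀ u, 0 ≤ P u := by
    intro u
    have hneg : P (-u) = P u := by simpa using hsmul (-1) u
    have h0 := hadd u (-u)
    simp [hP0] at h0
    linarith
  have hdiff : ∀ u v : ℝ × ℝ, P u - P v ≤ P (u - v) := by
    intro u v
    have := hadd (u - v) v
    simp at this
    linarith
  have hl1 : ∀ u : ℝ × ℝ, P u ≤ |u.1| + |u.2| := by
    intro u
    have hu : u = u.1 • ((1:ℝ),(0:ℝ)) + u.2 • ((0:ℝ),(1:ℝ)) := by simp [Prod.ext_iff]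
    calc P u = P (u.1 • ((1:ℝ),(0:ℝ)) + u.2 • ((0:ℝ),(1:ℝ))) := by rw [← hu]
      _ ≤ P (u.1 • ((1:ℝ),(0:ℝ))) + P (u.2 • ((0:ℝ),(1:ℝ))) := hadd _ _
      _ = |u.1| * P (1,0) + |u.2| * P (0,1) := by rw [hsmul, hsmul]
      _ ≤ |u.1| + |u.2| := by
          nlinarith [abs_nonneg u.1, abs_nonneg u.2, hnonneg ((1:ℝ),(0:ℝ)), hnonneg ((0:ℝ),(1:ℝ))]
  have : LipschitzWith 2 P := by
    apply LipschitzWith.of_dist_le_mul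
    intro u v
    rw [Real.dist_eq, Prod.dist_eq, Real.dist_eq, Real.dist_eq]
    have hab : |P u - P v| ≤ |u.1 - v.1| + |u.2 - v.2| := by
      rw [abs_le]
      constructor
      · have := hdiff v u
        have h2' := hl1 (v - u)
        simp only [Prod.fst_sub, Prod.snd_sub] at h2'
        rw [abs_sub_comm v.1 u.1, abs_sub_comm v.2 u.2] at h2'
        linarith
      · have := hdiff u v
        have h2' := hl1 (u - v)
        simp only [Prod.fst_sub, Prod.snd_sub] at h2'
        linarith
    have : |u.1 - v.1| + |u.2 - v.2| ≤ 2 * max |u.1 - v.1| |u.2 - v.2| := by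
      have := le_max_left |u.1 - v.1| |u.2 - v.2|
      have := le_max_right |u.1 - v.1| |u.2 - v.2|
      linarith
    push_cast
    linarith
  exact this.continuous


/-- `(ℝ², N)` is positively octahedral: for any finite family of positive norm-one
elements there is a positive norm-one `(c,d)` with `N((aᵢ,bᵢ)+(c,d)) = 2` for all `i`. -/
def PositivelyOctahedral (M : ℝ × ℝ → ℝ) : Prop :=
  ∀ n : ℕ, 0 < n → ∀ u : Fin n → ℝ × ℝ,
    (∀ i, 0 ≤ (u i).1 ∧ 0 ≤ (u i).2 ∧ M (u i) = 1) →
    ∃ v : ℝ × ℝ, 0 ≤ v.1 ∧ 0 ≤ v.2 ∧ M v = 1 ∧ ∀ i, M (u i + v) = 2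

/-- The dual norm `N*(c,d) = max{|ac| + |bd| : N(a,b) ≤ 1}` of an absolute normalized
norm on `ℝ²`. -/
def dualNormFun (N : AbsoluteNormalizedNorm) (u : ℝ × ℝ) : ℝ :=
  sSup {t : ℝ | ∃ a b : ℝ, N.toFun (a, b) ≤ 1 ∧ t = |a * u.1| + |b * u.2|}

/-- `(ℝ², N)` has the positive strong diameter 2 property. -/
def PositiveSD2P (N : AbsoluteNormalizedNorm) : Prop :=
  ∀ n : ℕ, 0 < n → ∀ (f : Fin n → ℝ × ℝ) (α lam : Fin n → ℝ),
    (∀ i, 0 ≤ (f i).1 ∧ 0 ≤ (f i).2 ∧ dualNormFun N (f i) = 1) →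
    (∀ i, 0 < α i) → (∀ i, 0 ≤ lam i) → (∑ i, lam i) = 1 →
    ∃ u : Fin n → ℝ × ℝ,
      (∀ i, 0 ≤ (u i).1 ∧ 0 ≤ (u i).2 ∧ N.toFun (u i) ≤ 1 ∧
        1 - α i < (f i).1 * (u i).1 + (f i).2 * (u i).2) ∧
      N.toFun (∑ i, lam i • u i) = 1


namespace AbsoluteNormalizedNorm

variable (N : AbsoluteNormalizedNorm)

lemma dual_set_nonempty (u : ℝ × ℝ) :
    {t : ℝ | ∃ a b : ℝ, N.toFun (a, b) ≤ 1 ∧ t = |a * u.1| + |b * u.2|}.Nonempty := by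
  refine ⟨0, 0, 0, ?_, by simp⟩
  rw [show ((0:ℝ),(0:ℝ)) = (0 : ℝ × ℝ) from rfl, N.map_zero]
  norm_num

lemma dual_set_bddAbove (u : ℝ × ℝ) :
    BddAbove {t : ℝ | ∃ a b : ℝ, N.toFun (a, b) ≤ 1 ∧ t = |a * u.1| + |b * u.2|} := by
  refine ⟨|u.1| + |u.2|, ?_⟩
  rintro t ⟨a, b, hab, rfl⟩
  have ha : |a| ≤ 1 := le_trans (N.fst_le a b) hab
  have hb : |b| ≤ 1 := le_trans (N.snd_le a b) hab
  rw [abs_mul, abs_mul]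
  nlinarith [abs_nonneg u.1, abs_nonneg u.2, abs_nonneg a, abs_nonneg b]

lemma le_dual {a b : ℝ} (hab : N.toFun (a, b) ≤ 1) (u : ℝ × ℝ) :
    |a * u.1| + |b * u.2| ≤ dualNormFun N u :=
  le_csSup (N.dual_set_bddAbove u) ⟨a, b, hab, rfl⟩

lemma dual_le {u : ℝ × ℝ} {t : ℝ}
    (h : ∀ a b : ℝ, N.toFun (a, b) ≤ 1 → |a * u.1| + |b * u.2| ≤ t) :
    dualNormFun N u ≤ t := by
  apply csSup_le (N.dual_set_nonempty u)
  rintro s ⟨a, b, hab, rfl⟩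
  exact h a b hab

lemma dual_e1 : dualNormFun N ((1:ℝ), (0:ℝ)) = 1 := by
  apply le_antisymm
  · apply N.dual_le
    intro a b hab
    have := N.fst_le a b
    simp only [mul_one, mul_zero, abs_zero, add_zero]
    linarith
  · have := N.le_dual (a := 1) (b := 0) (by rw [N.norm_one_zero]) ((1:ℝ),(0:ℝ))
    simpa using this

lemma dual_e2 : dualNormFun N ((0:ℝ), (1:ℝ)) = 1 := by
  apply le_antisymm
  · apply N.dual_le
    intro a b hab
    have := N.snd_le a b
    simp only [mul_one, mul_zero, abs_zero, zero_add]
    linarith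
  · have := N.le_dual (a := 0) (b := 1) (by rw [N.norm_zero_one]) ((0:ℝ),(1:ℝ))
    simpa using this

lemma dual_nonneg (u : ℝ × ℝ) : 0 ≤ dualNormFun N u := by
  have := N.le_dual (a := 0) (b := 0)
    (by rw [show ((0:ℝ),(0:ℝ)) = (0 : ℝ × ℝ) from rfl, N.map_zero]; norm_num) u
  simpa using this

lemma dual_add_le (u v : ℝ × ℝ) :
    dualNormFun N (u + v) ≤ dualNormFun N u + dualNormFun N v := by
  apply N.dual_le
  intro a b hab
  have h1 := N.le_dual hab u
  have h2 := N.le_dual hab v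
  have e1 : |a * (u + v).1| ≤ |a * u.1| + |a * v.1| := by
    rw [Prod.fst_add, mul_add]; exact abs_add_le _ _
  have e2 : |b * (u + v).2| ≤ |b * u.2| + |b * v.2| := by
    rw [Prod.snd_add, mul_add]; exact abs_add_le _ _
  linarith

lemma dual_smul (r : ℝ) (u : ℝ × ℝ) :
    dualNormFun N (r • u) = |r| * dualNormFun N u := by
  have key : ∀ (s : ℝ) (w : ℝ × ℝ), dualNormFun N (s • w) ≤ |s| * dualNormFun N w := by
    intro s w
    apply N.dual_le
    intro a b hab
    have h1 := N.le_dual hab w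
    have e1 : |a * (s • w).1| = |s| * |a * w.1| := by
      simp only [Prod.smul_fst, smul_eq_mul]
      rw [show a * (s * w.1) = s * (a * w.1) by ring, abs_mul]
    have e2 : |b * (s • w).2| = |s| * |b * w.2| := by
      simp only [Prod.smul_snd, smul_eq_mul]
      rw [show b * (s * w.2) = s * (b * w.2) by ring, abs_mul]
    rw [e1, e2, ← mul_add]
    exact mul_le_mul_of_nonneg_left h1 (abs_nonneg s)
  rcases eq_or_ne r 0 with hr | hr
  · subst hr
    simp only [zero_smul, abs_zero, zero_mul]
    apply le_antisymm
    · apply N.dual_le; intro a b hab; simp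
    · exact N.dual_nonneg 0
  · apply le_antisymm (key r u)
    have h2 := key r⁻¹ (r • u)
    rw [smul_smul, inv_mul_cancel₀ hr, one_smul] at h2
    rw [abs_inv] at h2
    have habs : 0 < |r| := abs_pos.mpr hr
    calc |r| * dualNormFun N u ≤ |r| * (|r|⁻¹ * dualNormFun N (r • u)) :=
          mul_le_mul_of_nonneg_left h2 (abs_nonneg r)
      _ = dualNormFun N (r • u) := by field_simp

end AbsoluteNormalizedNorm

namespace AbsoluteNormalizedNorm

variable (N : AbsoluteNormalizedNorm)

lemma continuous_toFun : Continuous N.toFun :=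
  cont_of_norm_like N.toFun N.add_le N.smul_eq (le_of_eq N.norm_one_zero)
    (le_of_eq N.norm_zero_one)

lemma continuous_dual : Continuous (dualNormFun N) :=
  cont_of_norm_like (dualNormFun N) N.dual_add_le N.dual_smul
    (le_of_eq (N.dual_e1)) (le_of_eq (N.dual_e2))

lemma ball_compact : IsCompact {p : ℝ × ℝ | N.toFun p ≤ 1} := by
  apply IsCompact.of_isClosed_subset (isCompact_Icc (a := ((-1 : ℝ), (-1 : ℝ))) (b := ((1:ℝ),(1:ℝ))))
  · exact isClosed_le N.continuous_toFun continuous_const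
  · intro p hp
    simp only [Set.mem_setOf_eq] at hp
    have h1 : |p.1| ≤ 1 := le_trans (by simpa using N.fst_le p.1 p.2) hp
    have h2 : |p.2| ≤ 1 := le_trans (by simpa using N.snd_le p.1 p.2) hp
    rw [abs_le] at h1 h2
    constructor
    · exact ⟨h1.1, h2.1⟩
    · exact ⟨h1.2, h2.2⟩

/-- Pair bound: `|x·v| ≤ N*(v) · N(x)` coordinatewise-absolutely. -/
lemma pair_bound (v x : ℝ × ℝ) :
    |x.1 * v.1| + |x.2 * v.2| ≤ dualNormFun N v * N.toFun x := by
  rcases eq_or_lt_of_le (N.nonneg x) with h0 | h0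
  · have hx : x = 0 := N.eq_zero x h0.symm
    subst hx; simp [N.map_zero]
  · set r := N.toFun x with hr
    have hx1 : N.toFun (r⁻¹ • x) = 1 := by
      rw [N.smul_eq, abs_inv, abs_of_pos h0]
      field_simp
      exact hr.symm
    have hmem : N.toFun ((r⁻¹ • x).1, (r⁻¹ • x).2) ≤ 1 := by
      rw [Prod.mk.eta]; exact le_of_eq hx1
    have := N.le_dual hmem v
    simp only [Prod.smul_fst, Prod.smul_snd, smul_eq_mul] at this
    have e1 : |r⁻¹ * x.1 * v.1| = r⁻¹ * |x.1 * v.1| := by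
      rw [show r⁻¹ * x.1 * v.1 = r⁻¹ * (x.1 * v.1) by ring, abs_mul, abs_inv, abs_of_pos h0]
    have e2 : |r⁻¹ * x.2 * v.2| = r⁻¹ * |x.2 * v.2| := by
      rw [show r⁻¹ * x.2 * v.2 = r⁻¹ * (x.2 * v.2) by ring, abs_mul, abs_inv, abs_of_pos h0]
    rw [e1, e2] at this
    have := mul_le_mul_of_nonneg_left this (le_of_lt h0)
    calc |x.1 * v.1| + |x.2 * v.2| = r * (r⁻¹ * |x.1 * v.1| + r⁻¹ * |x.2 * v.2|) := by
          field_simp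
      _ ≤ r * dualNormFun N v := this
      _ = dualNormFun N v * r := mul_comm _ _

/-- Attainment of the dual norm at a positive vector, with positive witness. -/
lemma dual_attained (u : ℝ × ℝ) (hu1 : 0 ≤ u.1) (hu2 : 0 ≤ u.2) :
    ∃ a b : ℝ, 0 ≤ a ∧ 0 ≤ b ∧ N.toFun (a, b) ≤ 1 ∧
      dualNormFun N u = a * u.1 + b * u.2 := by
  have hB : IsCompact {p : ℝ × ℝ | N.toFun p ≤ 1} := N.ball_compact
  have hne : ({p : ℝ × ℝ | N.toFun p ≤ 1}).Nonempty := ⟨0, by simp [N.map_zero]⟩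
  have hcont : ContinuousOn (fun p : ℝ × ℝ => |p.1 * u.1| + |p.2 * u.2|)
      {p : ℝ × ℝ | N.toFun p ≤ 1} := by
    apply Continuous.continuousOn
    continuity
  obtain ⟨p, hpB, hp⟩ := hB.exists_isMaxOn hne hcont
  have heq : dualNormFun N u = |p.1 * u.1| + |p.2 * u.2| := by
    apply le_antisymm
    · apply N.dual_le
      intro a b hab
      exact hp hab
    · exact N.le_dual (by rw [Prod.mk.eta]; exact hpB) u
  refine ⟨|p.1|, |p.2|, abs_nonneg _, abs_nonneg _, ?_, ?_⟩
  · rw [← N.absolute]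
    exact hpB
  · rw [heq, abs_mul, abs_mul, abs_of_nonneg hu1, abs_of_nonneg hu2]

end AbsoluteNormalizedNorm

namespace AbsoluteNormalizedNorm

variable (N : AbsoluteNormalizedNorm)

/-- If the dual norm is additive on `x, y`, it is additive on the cone they generate. -/
lemma dual_cone_additive {x y : ℝ × ℝ}
    (hxy : dualNormFun N (x + y) = dualNormFun N x + dualNormFun N y)
    {s t : ℝ} (hs : 0 ≤ s) (ht : 0 ≤ t) :
    dualNormFun N (s • x + t • y) = s * dualNormFun N x + t * dualNormFun N y := by
  apply le_antisymm
  · calc dualNormFun N (s • x + t • y)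
        ≤ dualNormFun N (s • x) + dualNormFun N (t • y) := N.dual_add_le _ _
      _ = s * dualNormFun N x + t * dualNormFun N y := by
          rw [N.dual_smul, N.dual_smul, abs_of_nonneg hs, abs_of_nonneg ht]
  · rcases le_total s t with hst | hst
    · have key : t • (x + y) = (s • x + t • y) + (t - s) • x := by
        rw [smul_add]; module
      have h1 : dualNormFun N (t • (x + y)) ≤
          dualNormFun N (s • x + t • y) + dualNormFun N ((t - s) • x) := by
        rw [key]; exact N.dual_add_le _ _
      rw [N.dual_smul, abs_of_nonneg ht, hxy, N.dual_smul,
        abs_of_nonneg (by linarith : (0:ℝ) ≤ t - s)] at h1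
      nlinarith [h1]
    · have key : s • (x + y) = (s • x + t • y) + (s - t) • y := by
        rw [smul_add]; module
      have h1 : dualNormFun N (s • (x + y)) ≤
          dualNormFun N (s • x + t • y) + dualNormFun N ((s - t) • y) := by
        rw [key]; exact N.dual_add_le _ _
      rw [N.dual_smul, abs_of_nonneg hs, hxy, N.dual_smul,
        abs_of_nonneg (by linarith : (0:ℝ) ≤ s - t)] at h1
      nlinarith [h1]

/-- Key lemma: if `v` is a positive dual-norm-one vector jointly "collinear" with
`e₁` and `e₂`, then `N*(f + v) = 2` for every positive dual-norm-one `f`. -/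
lemma dual_add_two {v : ℝ × ℝ} (hv1 : 0 ≤ v.1) (hv2 : 0 ≤ v.2)
    (hvn : dualNormFun N v = 1)
    (hve1 : dualNormFun N (((1:ℝ), (0:ℝ)) + v) = 2)
    (hve2 : dualNormFun N (((0:ℝ), (1:ℝ)) + v) = 2)
    {f : ℝ × ℝ} (hf1 : 0 ≤ f.1) (hf2 : 0 ≤ f.2) (hfn : dualNormFun N f = 1) :
    dualNormFun N (f + v) = 2 := by
  set e1 : ℝ × ℝ := ((1:ℝ), (0:ℝ)) with he1
  set e2 : ℝ × ℝ := ((0:ℝ), (1:ℝ)) with he2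
  have hadd1 : dualNormFun N (e1 + v) = dualNormFun N e1 + dualNormFun N v := by
    rw [hve1, N.dual_e1, hvn]; norm_num
  have hadd2 : dualNormFun N (e2 + v) = dualNormFun N e2 + dualNormFun N v := by
    rw [hve2, N.dual_e2, hvn]; norm_num
  rcases eq_or_lt_of_le hv2 with hd0 | hd0
  · -- v.2 = 0, so v = e1
    have hc : v.1 = 1 := by
      have hv : v = v.1 • e1 := by
        simp [he1, Prod.ext_iff, hd0.symm]
      have := N.dual_smul v.1 e1
      rw [← hv, hvn, N.dual_e1, mul_one, abs_of_nonneg hv1] at this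
      exact this.symm
    have hveq : v = e1 := by
      rw [Prod.ext_iff]; exact ⟨hc, hd0.symm⟩
    -- f = f.2 • e2 + f.1 • v
    have hfdec : f = f.2 • e2 + f.1 • v := by
      rw [hveq, Prod.ext_iff]
      constructor
      · simp [he1, he2]
      · simp [he1, he2]
    have h1 : dualNormFun N f = f.2 * dualNormFun N e2 + f.1 * dualNormFun N v := by
      conv_lhs => rw [hfdec]
      exact N.dual_cone_additive hadd2 hf2 hf1
    rw [hfn, N.dual_e2, hvn] at h1
    have hfv : f + v = f.2 • e2 + (f.1 + 1) • v := by
      conv_lhs => rw [hfdec]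
      module
    rw [hfv, N.dual_cone_additive hadd2 hf2 (by linarith), N.dual_e2, hvn]
    linarith
  · -- v.2 > 0
    rcases le_or_gt (f.2 * v.1) (f.1 * v.2) with hcase | hcase
    · -- f = p • e1 + q • v with p, q ≥ 0
      set p := (f.1 * v.2 - f.2 * v.1) / v.2 with hp
      set q := f.2 / v.2 with hq
      have hp0 : 0 ≤ p := div_nonneg (by linarith) (le_of_lt hd0)
      have hq0 : 0 ≤ q := div_nonneg hf2 (le_of_lt hd0)
      have hfdec : f = p • e1 + q • v := by
        rw [Prod.ext_iff]
        constructor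
        · simp only [Prod.fst_add, Prod.smul_fst, smul_eq_mul, he1]
          rw [hp, hq]; field_simp; ring
        · simp only [Prod.snd_add, Prod.smul_snd, smul_eq_mul, he1]
          rw [hp, hq]; field_simp; ring
      have h1 : dualNormFun N f = p * dualNormFun N e1 + q * dualNormFun N v := by
        rw [hfdec]; exact N.dual_cone_additive hadd1 hp0 hq0
      rw [hfn, N.dual_e1, hvn] at h1
      have hfv : f + v = p • e1 + (q + 1) • v := by
        conv_lhs => rw [hfdec]
        module
      rw [hfv, N.dual_cone_additive hadd1 hp0 (by linarith), N.dual_e1, hvn]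
      linarith
    · -- f.1 * v.2 < f.2 * v.1, so v.1 > 0
      have hc0 : 0 < v.1 := by
        rcases eq_or_lt_of_le hv1 with h | h
        · exfalso; nlinarith [mul_nonneg hf1 hv2]
        · exact h
      set p := (f.2 * v.1 - f.1 * v.2) / v.1 with hp
      set q := f.1 / v.1 with hq
      have hp0 : 0 ≤ p := div_nonneg (by linarith) (le_of_lt hc0)
      have hq0 : 0 ≤ q := div_nonneg hf1 (le_of_lt hc0)
      have hfdec : f = p • e2 + q • v := by
        rw [Prod.ext_iff]
        constructor
        · simp only [Prod.fst_add, Prod.smul_fst, smul_eq_mul, he2]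
          rw [hp, hq]; field_simp; ring
        · simp only [Prod.snd_add, Prod.smul_snd, smul_eq_mul, he2]
          rw [hp, hq]; field_simp; ring
      have h1 : dualNormFun N f = p * dualNormFun N e2 + q * dualNormFun N v := by
        rw [hfdec]; exact N.dual_cone_additive hadd2 hp0 hq0
      rw [hfn, N.dual_e2, hvn] at h1
      have hfv : f + v = p • e2 + (q + 1) • v := by
        conv_lhs => rw [hfdec]
        module
      rw [hfv, N.dual_cone_additive hadd2 hp0 (by linarith), N.dual_e2, hvn]
      linarith

end AbsoluteNormalizedNorm

namespace AbsoluteNormalizedNorm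

variable (N : AbsoluteNormalizedNorm)

/-- Every positive norm-one vector admits a positive norming functional. -/
lemma exists_norming {x : ℝ × ℝ} (hx1 : 0 ≤ x.1) (hx2 : 0 ≤ x.2)
    (hNx : N.toFun x = 1) :
    ∃ g : ℝ × ℝ, 0 ≤ g.1 ∧ 0 ≤ g.2 ∧ dualNormFun N g = 1 ∧
      g.1 * x.1 + g.2 * x.2 = 1 := by
  set s : Set (ℝ × ℝ) := {p | N.toFun p < 1} with hs
  have hconv : Convex ℝ s := by
    intro p hp q hq a b ha hb hab
    simp only [hs, Set.mem_setOf_eq] at hp hq ⊢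
    have h1 : N.toFun (a • p + b • q) ≤ a * N.toFun p + b * N.toFun q := by
      calc N.toFun (a • p + b • q) ≤ N.toFun (a • p) + N.toFun (b • q) := N.add_le _ _
        _ = a * N.toFun p + b * N.toFun q := by
            rw [N.smul_eq, N.smul_eq, abs_of_nonneg ha, abs_of_nonneg hb]
    have : a * N.toFun p + b * N.toFun q < 1 := by
      rcases eq_or_lt_of_le ha with ha0 | ha0
      · rw [← ha0] at hab ⊢
        simp at hab ⊢
        rw [hab]; simpa using hq
      · nlinarith [N.nonneg q]
    linarith
  have hopen : IsOpen s := by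
    have : s = N.toFun ⁻¹' Set.Iio 1 := rfl
    rw [this]
    exact isOpen_Iio.preimage N.continuous_toFun
  have hxs : x ∉ s := by simp [hs, hNx]
  obtain ⟨L, hL⟩ := geometric_hahn_banach_open_point hconv hopen hxs
  have hLx_pos : 0 < L x := by
    have h0 : (0 : ℝ × ℝ) ∈ s := by simp [hs, N.map_zero]
    have := hL 0 h0
    simpa using this
  have hball : ∀ p : ℝ × ℝ, N.toFun p ≤ 1 → L p ≤ L x := by
    intro p hp
    rcases le_or_gt (L p) 0 with h | h
    · linarith
    · by_contra hcon
      push_neg at hcon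
      have hq : L x / L p < 1 := (div_lt_one h).mpr hcon
      obtain ⟨k, hk1, hk2⟩ := exists_between hq
      have hk0 : 0 < k := lt_of_le_of_lt (div_nonneg hLx_pos.le h.le) hk1
      have hkp : N.toFun (k • p) < 1 := by
        rw [N.smul_eq, abs_of_pos hk0]
        nlinarith [N.nonneg p]
      have := hL (k • p) hkp
      rw [map_smul, smul_eq_mul] at this
      rw [div_lt_iff₀ h] at hk1
      linarith
  set g1 := L ((1:ℝ), (0:ℝ)) with hg1
  set g2 := L ((0:ℝ), (1:ℝ)) with hg2
  have hLp : ∀ p : ℝ × ℝ, L p = p.1 * g1 + p.2 * g2 := by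
    intro p
    have hp : p = p.1 • ((1:ℝ),(0:ℝ)) + p.2 • ((0:ℝ),(1:ℝ)) := by simp [Prod.ext_iff]
    conv_lhs => rw [hp]
    rw [map_add, map_smul, map_smul, smul_eq_mul, smul_eq_mul]
  set T := L x with hT
  -- the absolute-value trick
  have habs_bound : ∀ a b : ℝ, N.toFun (a, b) ≤ 1 → |a| * |g1| + |b| * |g2| ≤ T := by
    intro a b hab
    set z : ℝ × ℝ := (if g1 < 0 then -|a| else |a|, if g2 < 0 then -|b| else |b|) with hz
    have hNz : N.toFun z ≤ 1 := by
      have : N.toFun z = N.toFun (a, b) := by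
        rw [hz, N.absolute, N.absolute a b]
        congr 1
        rw [Prod.ext_iff]
        constructor
        · simp only []
          split_ifs <;> simp
        · simp only []
          split_ifs <;> simp
      linarith [this.le, this.ge, hab]
    have hLz : L z = |a| * |g1| + |b| * |g2| := by
      rw [hLp z, hz]
      simp only []
      split_ifs with h1 h2 h2
      · rw [abs_of_neg h1, abs_of_neg h2]
        try ring
      · rw [abs_of_neg h1, abs_of_nonneg (not_lt.mp h2)]
        try ring
      · rw [abs_of_nonneg (not_lt.mp h1), abs_of_neg h2]
        try ring
      · rw [abs_of_nonneg (not_lt.mp h1), abs_of_nonneg (not_lt.mp h2)]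
        try ring
    rw [← hLz]
    exact hball z hNz
  have hxg : x.1 * |g1| + x.2 * |g2| = T := by
    apply le_antisymm
    · have := habs_bound x.1 x.2 (by rw [Prod.mk.eta]; exact hNx.le)
      rw [abs_of_nonneg hx1, abs_of_nonneg hx2] at this
      exact this
    · have : T = x.1 * g1 + x.2 * g2 := hLp x
      rw [this]
      have h1 : x.1 * g1 ≤ x.1 * |g1| := mul_le_mul_of_nonneg_left (le_abs_self g1) hx1
      have h2 : x.2 * g2 ≤ x.2 * |g2| := mul_le_mul_of_nonneg_left (le_abs_self g2) hx2
      linarith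
  refine ⟨(|g1| / T, |g2| / T), ?_, ?_, ?_, ?_⟩
  · exact div_nonneg (abs_nonneg _) hLx_pos.le
  · exact div_nonneg (abs_nonneg _) hLx_pos.le
  · -- dual norm of g is 1
    apply le_antisymm
    · apply N.dual_le
      intro a b hab
      simp only []
      rw [abs_mul, abs_mul, abs_div, abs_div, abs_abs, abs_abs, abs_of_pos hLx_pos]
      have hb := habs_bound a b hab
      calc |a| * (|g1| / T) + |b| * (|g2| / T) = (|a| * |g1| + |b| * |g2|) / T := by ring
        _ ≤ T / T := by
            apply div_le_div_of_nonneg_right hb hLx_pos.le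
        _ = 1 := div_self hLx_pos.ne'
    · have hmem := N.le_dual (a := x.1) (b := x.2)
        (by rw [Prod.mk.eta]; exact hNx.le) ((|g1| / T, |g2| / T) : ℝ × ℝ)
      simp only [] at hmem
      rw [abs_mul, abs_mul, abs_div, abs_div, abs_abs, abs_abs, abs_of_pos hLx_pos,
        abs_of_nonneg hx1, abs_of_nonneg hx2] at hmem
      calc (1:ℝ) = (x.1 * |g1| + x.2 * |g2|) / T := by rw [hxg]; exact (div_self hLx_pos.ne').symm
        _ = x.1 * (|g1| / T) + x.2 * (|g2| / T) := by ring
        _ ≤ dualNormFun N (|g1| / T, |g2| / T) := hmem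
  · simp only []
    calc |g1| / T * x.1 + |g2| / T * x.2 = (x.1 * |g1| + x.2 * |g2|) / T := by ring
      _ = 1 := by rw [hxg]; exact div_self hLx_pos.ne'

end AbsoluteNormalizedNorm

namespace AbsoluteNormalizedNorm

variable (N : AbsoluteNormalizedNorm)

lemma sum_norm_le {n : ℕ} (x : Fin n → ℝ × ℝ) :
    N.toFun (∑ i, x i) ≤ ∑ i, N.toFun (x i) := by
  classical
  induction (Finset.univ : Finset (Fin n)) using Finset.cons_induction with
  | empty => simp [N.map_zero]
  | cons a s ha ih =>
      rw [Finset.sum_cons, Finset.sum_cons]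
      calc N.toFun (x a + ∑ i ∈ s, x i) ≤ N.toFun (x a) + N.toFun (∑ i ∈ s, x i) := N.add_le _ _
        _ ≤ N.toFun (x a) + ∑ i ∈ s, N.toFun (x i) := by linarith [ih]

lemma fst_le_dual (u : ℝ × ℝ) : |u.1| ≤ dualNormFun N u := by
  have := N.le_dual (a := 1) (b := 0) (le_of_eq N.norm_one_zero) u
  simpa using this

lemma snd_le_dual (u : ℝ × ℝ) : |u.2| ≤ dualNormFun N u := by
  have := N.le_dual (a := 0) (b := 1) (le_of_eq N.norm_zero_one) u
  simpa using this

/-- Direction: the joint-collinearity condition implies the positive SD2P. -/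
lemma sd2p_of_cond {v : ℝ × ℝ} (hv1 : 0 ≤ v.1) (hv2 : 0 ≤ v.2)
    (hvn : dualNormFun N v = 1)
    (hve1 : dualNormFun N (((1:ℝ), (0:ℝ)) + v) = 2)
    (hve2 : dualNormFun N (((0:ℝ), (1:ℝ)) + v) = 2) :
    PositiveSD2P N := by
  intro n hn f α lam hf hα hlam hsum
  have h2 : ∀ i, dualNormFun N (f i + v) = 2 := fun i =>
    N.dual_add_two hv1 hv2 hvn hve1 hve2 (hf i).1 (hf i).2.1 (hf i).2.2
  have hpos1 : ∀ i, 0 ≤ (f i + v).1 := fun i => by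
    rw [Prod.fst_add]; exact add_nonneg (hf i).1 hv1
  have hpos2 : ∀ i, 0 ≤ (f i + v).2 := fun i => by
    rw [Prod.snd_add]; exact add_nonneg (hf i).2.1 hv2
  choose a b ha hb hNab hval using fun i => N.dual_attained (f i + v) (hpos1 i) (hpos2 i)
  -- a i * (f i).1 + b i * (f i).2 = 1 and a i * v.1 + b i * v.2 = 1
  have hfs : ∀ i, a i * (f i).1 + b i * (f i).2 ≤ 1 := by
    intro i
    have hpb := N.pair_bound (f i) (a i, b i)
    simp only [] at hpb
    rw [abs_mul, abs_mul, abs_of_nonneg (ha i), abs_of_nonneg (hb i),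
      abs_of_nonneg (hf i).1, abs_of_nonneg (hf i).2.1] at hpb
    have hd := (hf i).2.2
    nlinarith [N.nonneg ((a i, b i) : ℝ × ℝ), hNab i, N.dual_nonneg (f i)]
  have hvs : ∀ i, a i * v.1 + b i * v.2 ≤ 1 := by
    intro i
    have hpb := N.pair_bound v (a i, b i)
    simp only [] at hpb
    rw [abs_mul, abs_mul, abs_of_nonneg (ha i), abs_of_nonneg (hb i),
      abs_of_nonneg hv1, abs_of_nonneg hv2] at hpb
    nlinarith [N.nonneg ((a i, b i) : ℝ × ℝ), hNab i, N.dual_nonneg v]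
  have hexact : ∀ i, a i * (f i).1 + b i * (f i).2 = 1 ∧ a i * v.1 + b i * v.2 = 1 := by
    intro i
    have := hval i
    rw [h2 i, Prod.fst_add, Prod.snd_add] at this
    have h1 := hfs i
    have h2' := hvs i
    constructor <;> nlinarith [this]
  refine ⟨fun i => (a i, b i), ?_, ?_⟩
  · intro i
    refine ⟨ha i, hb i, hNab i, ?_⟩
    have := (hexact i).1
    have hαi := hα i
    simp only []
    nlinarith [this]
  · set x : ℝ × ℝ := ∑ i, lam i • ((a i, b i) : ℝ × ℝ) with hx
    have hxle : N.toFun x ≤ 1 := by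
      calc N.toFun x ≤ ∑ i, N.toFun (lam i • ((a i, b i) : ℝ × ℝ)) := N.sum_norm_le _
        _ = ∑ i, lam i * N.toFun ((a i, b i) : ℝ × ℝ) := by
            apply Finset.sum_congr rfl
            intro i _
            rw [N.smul_eq, abs_of_nonneg (hlam i)]
        _ ≤ ∑ i, lam i := by
            apply Finset.sum_le_sum
            intro i _
            nlinarith [hNab i, hlam i, N.nonneg ((a i, b i) : ℝ × ℝ)]
        _ = 1 := hsum
    have hx1 : x.1 = ∑ i, lam i * a i := by
      rw [hx, Prod.fst_sum]
      apply Finset.sum_congr rfl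
      intro i _
      simp
    have hx2 : x.2 = ∑ i, lam i * b i := by
      rw [hx, Prod.snd_sum]
      apply Finset.sum_congr rfl
      intro i _
      simp
    have hxpos1 : 0 ≤ x.1 := by
      rw [hx1]
      apply Finset.sum_nonneg
      intro i _
      exact mul_nonneg (hlam i) (ha i)
    have hxpos2 : 0 ≤ x.2 := by
      rw [hx2]
      apply Finset.sum_nonneg
      intro i _
      exact mul_nonneg (hlam i) (hb i)
    have hvx : x.1 * v.1 + x.2 * v.2 = 1 := by
      rw [hx1, hx2, Finset.sum_mul, Finset.sum_mul, ← Finset.sum_add_distrib]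
      rw [← hsum]
      apply Finset.sum_congr rfl
      intro i _
      have := (hexact i).2
      linear_combination lam i * this
    have hlow := N.pair_bound v x
    rw [abs_mul, abs_mul, abs_of_nonneg hxpos1, abs_of_nonneg hxpos2,
      abs_of_nonneg hv1, abs_of_nonneg hv2, hvn, one_mul, hvx] at hlow
    linarith [hxle, hlow]

end AbsoluteNormalizedNorm

namespace AbsoluteNormalizedNorm

variable (N : AbsoluteNormalizedNorm)

lemma cond_of_sd2p (h : PositiveSD2P N) :
    ∃ v : ℝ × ℝ, 0 ≤ v.1 ∧ 0 ≤ v.2 ∧ dualNormFun N v = 1 ∧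
      dualNormFun N (((1:ℝ), (0:ℝ)) + v) = 2 ∧
      dualNormFun N (((0:ℝ), (1:ℝ)) + v) = 2 := by
  set e1 : ℝ × ℝ := ((1:ℝ), (0:ℝ)) with he1
  set e2 : ℝ × ℝ := ((0:ℝ), (1:ℝ)) with he2
  -- Step 1: for every ε > 0 there is a positive dual-norm-one g almost collinear with e1, e2
  have claim : ∀ ε : ℝ, 0 < ε → ∃ g : ℝ × ℝ, (0 ≤ g.1 ∧ 0 ≤ g.2 ∧ dualNormFun N g = 1) ∧
      2 - ε < dualNormFun N (e1 + g) ∧ 2 - ε < dualNormFun N (e2 + g) := by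
    intro ε hε
    obtain ⟨u, hu, hNsum⟩ := h 2 (by norm_num) ![e1, e2] ![ε, ε] ![1/2, 1/2]
      (by
        intro i
        fin_cases i
        · exact ⟨by norm_num [he1], by norm_num [he1], by simpa [he1] using N.dual_e1⟩
        · exact ⟨by norm_num [he2], by norm_num [he2], by simpa [he2] using N.dual_e2⟩)
      (by intro i; fin_cases i <;> simpa using hε)
      (by intro i; fin_cases i <;> norm_num)
      (by simp [Fin.sum_univ_two]; norm_num)
    have hu0 := hu 0
    have hu1 := hu 1
    simp only [Matrix.cons_val_zero, Matrix.cons_val_one, Matrix.head_cons, he1, he2] at hu0 hu1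
    obtain ⟨h01, h02, h0N, h0f⟩ := hu0
    obtain ⟨h11, h12, h1N, h1f⟩ := hu1
    rw [Fin.sum_univ_two] at hNsum
    simp only [Matrix.cons_val_zero, Matrix.cons_val_one, Matrix.head_cons] at hNsum
    set x : ℝ × ℝ := (1/2 : ℝ) • u 0 + (1/2 : ℝ) • u 1 with hx
    have hNx : N.toFun x = 1 := by
      rw [hx]; convert hNsum using 2 <;> norm_num
    have hx1 : x.1 = (1/2) * (u 0).1 + (1/2) * (u 1).1 := by simp [hx]
    have hx2 : x.2 = (1/2) * (u 0).2 + (1/2) * (u 1).2 := by simp [hx]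
    have hxp1 : 0 ≤ x.1 := by rw [hx1]; linarith
    have hxp2 : 0 ≤ x.2 := by rw [hx2]; linarith
    obtain ⟨g, hg1, hg2, hgn, hgx⟩ := N.exists_norming hxp1 hxp2 hNx
    -- g · u i ≤ 1
    have hgu : ∀ i : Fin 2, g.1 * (u i).1 + g.2 * (u i).2 ≤ 1 := by
      intro i
      have hpb := N.pair_bound g (u i)
      have hNi : N.toFun (u i) ≤ 1 := by fin_cases i <;> assumption
      have hup1 : 0 ≤ (u i).1 := by fin_cases i <;> assumption
      have hup2 : 0 ≤ (u i).2 := by fin_cases i <;> assumption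
      rw [abs_mul, abs_mul, abs_of_nonneg hup1, abs_of_nonneg hup2,
        abs_of_nonneg hg1, abs_of_nonneg hg2, hgn, one_mul] at hpb
      nlinarith [hpb]
    -- g · u i = 1
    have hgu0 : g.1 * (u 0).1 + g.2 * (u 0).2 = 1 := by
      have e0 := hgu 0
      have e1' := hgu 1
      rw [hx1, hx2] at hgx
      nlinarith [hgx]
    have hgu1 : g.1 * (u 1).1 + g.2 * (u 1).2 = 1 := by
      have e0 := hgu 0
      rw [hx1, hx2] at hgx
      nlinarith [hgx]
    refine ⟨g, ⟨hg1, hg2, hgn⟩, ?_, ?_⟩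
    · have hmem := N.le_dual (a := (u 0).1) (b := (u 0).2)
        (by rw [Prod.mk.eta]; exact h0N) (e1 + g)
      have hco : (e1 + g).1 = 1 + g.1 := by simp [he1]
      have hco2 : (e1 + g).2 = g.2 := by simp [he1]
      rw [hco, hco2, abs_mul, abs_mul, abs_of_nonneg h01, abs_of_nonneg h02,
        abs_of_nonneg (by linarith : (0:ℝ) ≤ 1 + g.1), abs_of_nonneg hg2] at hmem
      have hexp : (u 0).1 * (1 + g.1) + (u 0).2 * g.2
          = (u 0).1 + (g.1 * (u 0).1 + g.2 * (u 0).2) := by ring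
      rw [hexp, hgu0] at hmem
      linarith [hmem, h0f]
    · have hmem := N.le_dual (a := (u 1).1) (b := (u 1).2)
        (by rw [Prod.mk.eta]; exact h1N) (e2 + g)
      have hco : (e2 + g).1 = g.1 := by simp [he2]
      have hco2 : (e2 + g).2 = 1 + g.2 := by simp [he2]
      rw [hco, hco2, abs_mul, abs_mul, abs_of_nonneg h11, abs_of_nonneg h12,
        abs_of_nonneg hg1, abs_of_nonneg (by linarith : (0:ℝ) ≤ 1 + g.2)] at hmem
      have hexp : (u 1).1 * g.1 + (u 1).2 * (1 + g.2)
          = (u 1).2 + (g.1 * (u 1).1 + g.2 * (u 1).2) := by ring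
      rw [hexp, hgu1] at hmem
      linarith [hmem, h1f]
  -- Step 2: compactness
  set K : Set (ℝ × ℝ) := {w | 0 ≤ w.1 ∧ 0 ≤ w.2 ∧ dualNormFun N w = 1} with hK
  have hKc : IsCompact K := by
    apply IsCompact.of_isClosed_subset
      (isCompact_Icc (a := ((-1 : ℝ), (-1 : ℝ))) (b := ((1:ℝ),(1:ℝ))))
    · have h1 : IsClosed {w : ℝ × ℝ | 0 ≤ w.1} := isClosed_le continuous_const continuous_fst
      have h2 : IsClosed {w : ℝ × ℝ | 0 ≤ w.2} := isClosed_le continuous_const continuous_snd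
      have h3 : IsClosed {w : ℝ × ℝ | dualNormFun N w = 1} :=
        isClosed_eq N.continuous_dual continuous_const
      have : K = {w : ℝ × ℝ | 0 ≤ w.1} ∩ ({w : ℝ × ℝ | 0 ≤ w.2} ∩
          {w : ℝ × ℝ | dualNormFun N w = 1}) := by
        ext w; simp [hK, Set.mem_setOf_eq, and_assoc]
      rw [this]
      exact h1.inter (h2.inter h3)
    · rintro w ⟨hw1, hw2, hwn⟩
      have a1 : |w.1| ≤ 1 := by rw [← hwn]; exact N.fst_le_dual w
      have a2 : |w.2| ≤ 1 := by rw [← hwn]; exact N.snd_le_dual w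
      rw [abs_le] at a1 a2
      exact ⟨⟨a1.1, a2.1⟩, ⟨a1.2, a2.2⟩⟩
  have hKne : K.Nonempty := ⟨e1, by norm_num [hK, he1], by norm_num [hK, he1],
    by simpa [he1] using N.dual_e1⟩
  have hφ : ContinuousOn (fun w : ℝ × ℝ => dualNormFun N (e1 + w) + dualNormFun N (e2 + w)) K := by
    apply Continuous.continuousOn
    have hc := N.continuous_dual
    exact (hc.comp (continuous_const.add continuous_id)).add
      (hc.comp (continuous_const.add continuous_id))
  obtain ⟨v0, hv0K, hmax⟩ := hKc.exists_isMaxOn hKne hφ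
  obtain ⟨hv01, hv02, hv0n⟩ := hv0K
  have hup1 : dualNormFun N (e1 + v0) ≤ 2 := by
    have := N.dual_add_le e1 v0
    rw [show dualNormFun N e1 = 1 from by simpa [he1] using N.dual_e1, hv0n] at this
    linarith
  have hup2 : dualNormFun N (e2 + v0) ≤ 2 := by
    have := N.dual_add_le e2 v0
    rw [show dualNormFun N e2 = 1 from by simpa [he2] using N.dual_e2, hv0n] at this
    linarith
  have hsum4 : 4 ≤ dualNormFun N (e1 + v0) + dualNormFun N (e2 + v0) := by
    by_contra hcon
    push_neg at hcon
    set ε := (4 - (dualNormFun N (e1 + v0) + dualNormFun N (e2 + v0))) / 2 with hε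
    have hε0 : 0 < ε := by rw [hε]; linarith
    obtain ⟨g, hgK, hg1, hg2⟩ := claim ε hε0
    have := hmax hgK
    simp only [Set.mem_setOf_eq] at this
    rw [hε] at hg1 hg2
    linarith
  exact ⟨v0, hv01, hv02, hv0n, by linarith, by linarith⟩

end AbsoluteNormalizedNorm

/-- `(ℝ², N)` has the positive strong diameter 2 property iff `(ℝ², N*)` is positively
octahedral. -/
theorem positiveSD2P_iff_dual_positivelyOctahedral (N : AbsoluteNormalizedNorm) :
    PositiveSD2P N ↔ PositivelyOctahedral (dualNormFun N) := by
  constructor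
  · intro h
    obtain ⟨v, hv1, hv2, hvn, hve1, hve2⟩ := N.cond_of_sd2p h
    intro n hn u hu
    refine ⟨v, hv1, hv2, hvn, fun i => ?_⟩
    exact N.dual_add_two hv1 hv2 hvn hve1 hve2 (hu i).1 (hu i).2.1 (hu i).2.2
  · intro h
    obtain ⟨v, hv1, hv2, hvn, hve⟩ := h 2 (by norm_num)
      ![((1:ℝ), (0:ℝ)), ((0:ℝ), (1:ℝ))]
      (by
        intro i
        fin_cases i
        · exact ⟨by norm_num, by norm_num, by simpa using N.dual_e1⟩
        · exact ⟨by norm_num, by norm_num, by simpa using N.dual_e2⟩)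
    have hve1 := hve 0
    have hve2 := hve 1
    simp only [Matrix.cons_val_zero, Matrix.cons_val_one, Matrix.head_cons] at hve1 hve2
    exact N.sd2p_of_cond hv1 hv2 hvn hve1 hve2
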